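/- arXiv:1209.2259 — 3 statements merged into one kernel-verified Lean document; each statement's English description precedes it below -/
import Mathlib

section
/- For all (s₁,s₂) ∈ ℝ², the inequalities (√3/3)·f(s₁,s₂) ≤ f̃(s₁,s₂) ≤ √3·f(s₁,s₂) hold, where f(s₁,s₂) = 4 − 2cos s₁ − 2cos s₂ and f̃(s₁,s₂) = (√3/3)(6 − 2cos s₁ − 2cos s₂ − 2cos(s₁+s₂)). In other words, the generating function f̃ arising from linear finite elements on a uniform equilateral-triangle mesh is equivalent to the classical discrete-Laplacian generating function f. -/
/-!
With `s₁ = 2a`, `s₂ = 2b` and `1 - cos 2x = 2 sin² x`, the two symbols become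
`f = 4 (sin² a + sin² b)` and `f̃ = (√3/3) · 4 (sin² a + sin² b + sin² (a + b))`.
The lower bound is `sin² (a + b) ≥ 0`; the upper bound is
`sin² (a + b) ≤ (|sin a| + |sin b|)² ≤ 2 (sin² a + sin² b)`.
-/

open Real

lemma Real.abs_sin_add_le (a b : ℝ) : |sin (a + b)| ≤ |sin a| + |sin b| :=
  calc |sin (a + b)| = |sin a * cos b + cos a * sin b| := by rw [sin_add]
    _ ≤ |sin a| * |cos b| + |cos a| * |sin b| := by
      simpa only [abs_mul] using abs_add_le (sin a * cos b) (cos a * sin b)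
    _ ≤ |sin a| + |sin b| := by
      gcongr
      · exact mul_le_of_le_one_right (abs_nonneg _) (abs_cos_le_one b)
      · exact mul_le_of_le_one_left (abs_nonneg _) (abs_cos_le_one a)

lemma Real.sin_add_sq_le (a b : ℝ) : sin (a + b) ^ 2 ≤ 2 * (sin a ^ 2 + sin b ^ 2) :=
  calc sin (a + b) ^ 2 = |sin (a + b)| ^ 2 := (sq_abs _).symm
    _ ≤ (|sin a| + |sin b|) ^ 2 := by gcongr; exact abs_sin_add_le a b
    _ ≤ 2 * (|sin a| ^ 2 + |sin b| ^ 2) := add_sq_le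
    _ = 2 * (sin a ^ 2 + sin b ^ 2) := by rw [sq_abs, sq_abs]

/-- pointwise equivalence of the FE generating function
`f̃(s₁,s₂) = (√3/3)(6 − 2cos s₁ − 2cos s₂ − 2cos(s₁+s₂))` and the classical
discrete-Laplacian generating function `f(s₁,s₂) = 4 − 2cos s₁ − 2cos s₂`:
for all `(s₁,s₂) ∈ ℝ²`, `(√3/3)·f ≤ f̃ ≤ √3·f`. -/
theorem generating_functions_equivalent (s₁ s₂ : ℝ) :
    (Real.sqrt 3 / 3) * (4 - 2 * Real.cos s₁ - 2 * Real.cos s₂) ≤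
        (Real.sqrt 3 / 3) *
          (6 - 2 * Real.cos s₁ - 2 * Real.cos s₂ - 2 * Real.cos (s₁ + s₂)) ∧
      (Real.sqrt 3 / 3) *
          (6 - 2 * Real.cos s₁ - 2 * Real.cos s₂ - 2 * Real.cos (s₁ + s₂)) ≤
        Real.sqrt 3 * (4 - 2 * Real.cos s₁ - 2 * Real.cos s₂) := by
  obtain ⟨a, rfl⟩ : ∃ a, s₁ = 2 * a := ⟨s₁ / 2, by ring⟩
  obtain ⟨b, rfl⟩ : ∃ b, s₂ = 2 * b := ⟨s₂ / 2, by ring⟩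
  rw [← mul_add]
  simp only [cos_two_mul_eq_one_sub]
  have h_sqrt : 0 ≤ √3 / 3 := by positivity
  exact ⟨by linear_combination 4 * mul_nonneg h_sqrt (sq_nonneg (sin (a + b))),
    by linear_combination 4 * mul_le_mul_of_nonneg_left (sin_add_sq_le a b) h_sqrt⟩
end

section
/- Strict positivity of the Toeplitz operator: if g is a real-valued function on ℝ², 2π-periodic in each variable, Lebesgue integrable on (−π,π]², with g(s) ≥ 0 for almost every s ∈ (−π,π]² and g not equal to zero almost everywhere, then for every order N = (N₁,N₂) the Hermitian matrix T_N(g) is positive definite. -/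
open MeasureTheory Matrix Real Filter
open scoped ComplexOrder

/-!
For `v ≠ 0` one has `v* T_N(g) v = (1/4π²) ∫ g |P_v|²` with the trigonometric polynomial
`P_v(s) = ∑_j v_j e^{i⟨j,s⟩}`, so it suffices that `P_v` vanishes only on a null set. For each
`s₁`, `P_v(s₁, ·)` is a polynomial in `e^{is₂}`; its coefficients are themselves trigonometric
polynomials in `s₁`, not all identically zero, so off a countable set of `s₁` the slice has only
countably many zeros, and Fubini (`measure_prod_null`) concludes.
-/

/-- The `j`-th Fourier coefficient `a_j(g) = (1/(4π²)) ∫_{(−π,π]²} g(s) e^{−i⟨j,s⟩} ds`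
of an integrable function `g : ℝ² → ℝ`. -/
noncomputable def fourierCoef (g : ℝ × ℝ → ℝ) (j : ℤ × ℤ) : ℂ :=
  (1 / (4 * (Real.pi : ℂ) ^ 2)) *
    ∫ s in Set.Ioc (-Real.pi) Real.pi ×ˢ Set.Ioc (-Real.pi) Real.pi,
      (g s : ℂ) * Complex.exp (-Complex.I * ((j.1 : ℂ) * s.1 + (j.2 : ℂ) * s.2))

/-- The two-level Toeplitz matrix `T_N(g)` of order `N = (N₁, N₂)` generated by `g`,
with entries `(T_N(g))_{(p,q),(r,t)} = a_{(p−r, q−t)}(g)`. -/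
noncomputable def toeplitz (N₁ N₂ : ℕ) (g : ℝ × ℝ → ℝ) :
    Matrix (Fin N₁ × Fin N₂) (Fin N₁ × Fin N₂) ℂ :=
  Matrix.of fun p q =>
    fourierCoef g ((p.1 : ℤ) - (q.1 : ℤ), (p.2 : ℤ) - (q.2 : ℤ))

theorem countable_setOf_sum_mul_exp_eq_zero {n : ℕ} {w : Fin n → ℂ} (hw : w ≠ 0) :
    {t : ℝ | ∑ k : Fin n, w k * Complex.exp (Complex.I * ((k : ℕ) * t)) = 0}.Countable := by
  obtain ⟨k₀, hk₀⟩ := Function.ne_iff.mp hw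
  set Q : Polynomial ℂ := ∑ k : Fin n, Polynomial.C (w k) * Polynomial.X ^ (k : ℕ)
  have hQ : Q ≠ 0 := by
    refine fun h => hk₀ ?_
    have hcoeff : Q.coeff k₀ = w k₀ := by
      simp only [Q, Polynomial.finsetSum_coeff, Polynomial.coeff_C_mul_X_pow]
      rw [Finset.sum_eq_single k₀ (fun k _ hk => if_neg (Fin.val_injective.ne hk.symm))
        (by simp)]
      exact if_pos rfl
    rw [← hcoeff, h, Polynomial.coeff_zero, Pi.zero_apply]
  refine ((Polynomial.finite_setOfPred_isRoot hQ).countable.preimage_circleMap 0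
    one_ne_zero).mono fun t ht => ?_
  simp only [Set.mem_ofPred_eq, Set.mem_preimage, circleMap, zero_add, Complex.ofReal_one,
    one_mul, Polynomial.IsRoot, Q, Polynomial.eval_finsetSum, Polynomial.eval_mul,
    Polynomial.eval_C, Polynomial.eval_pow, Polynomial.eval_X] at ht ⊢
  rw [← ht]
  refine Finset.sum_congr rfl fun k _ => ?_
  rw [← Complex.exp_nat_mul]
  ring_nf

noncomputable def trigPoly {N₁ N₂ : ℕ} (v : Fin N₁ × Fin N₂ → ℂ) (s : ℝ × ℝ) : ℂ :=
  ∑ j : Fin N₁ × Fin N₂, v j * Complex.exp (Complex.I * ((j.1 : ℕ) * s.1 + (j.2 : ℕ) * s.2))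

section trigPoly

variable {N₁ N₂ : ℕ} (v : Fin N₁ × Fin N₂ → ℂ)

@[fun_prop]
theorem continuous_trigPoly : Continuous (trigPoly v) := by
  unfold trigPoly
  fun_prop

theorem norm_trigPoly_le (s : ℝ × ℝ) : ‖trigPoly v s‖ ≤ ∑ j, ‖v j‖ := by
  refine (norm_sum_le _ _).trans (Finset.sum_le_sum fun j _ => ?_)
  rw [norm_mul, Complex.norm_exp]
  simp

theorem trigPoly_mk (x y : ℝ) :
    trigPoly v (x, y) = ∑ q : Fin N₂,
      (∑ p : Fin N₁, v (p, q) * Complex.exp (Complex.I * ((p : ℕ) * x))) *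
        Complex.exp (Complex.I * ((q : ℕ) * y)) := by
  simp only [trigPoly, Fintype.sum_prod_type, Finset.sum_mul, mul_assoc, ← Complex.exp_add]
  rw [Finset.sum_comm]
  simp only [mul_add]

theorem ae_trigPoly_ne_zero (hv : v ≠ 0) : ∀ᵐ s : ℝ × ℝ, trigPoly v s ≠ 0 := by
  obtain ⟨⟨p₀, q₀⟩, hv₀⟩ := Function.ne_iff.mp hv
  have hZ : MeasurableSet {s | trigPoly v s = 0} :=
    (isClosed_eq (continuous_trigPoly v) continuous_const).measurableSet
  rw [ae_iff, Measure.volume_eq_prod]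
  simp only [not_not]
  rw [Measure.measure_prod_null hZ]
  have hbad := countable_setOf_sum_mul_exp_eq_zero (n := N₁) (w := fun p => v (p, q₀))
    fun h => hv₀ (congrFun h p₀)
  filter_upwards [hbad.ae_notMem volume] with x hx
  have hslice := countable_setOf_sum_mul_exp_eq_zero (w := fun q => ∑ p : Fin N₁,
    v (p, q) * Complex.exp (Complex.I * ((p : ℕ) * x))) fun h => hx (congrFun h q₀)
  refine measure_mono_null (fun y hy => ?_) (hslice.measure_zero volume)
  simpa [trigPoly_mk] using hy

end trigPoly

theorem integrable_fourierCoef_integrand {g : ℝ × ℝ → ℝ} {S : Set (ℝ × ℝ)}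
    (hg : IntegrableOn g S) (j : ℤ × ℤ) :
    Integrable (fun s => (g s : ℂ) *
      Complex.exp (-Complex.I * ((j.1 : ℂ) * s.1 + (j.2 : ℂ) * s.2))) (volume.restrict S) := by
  refine hg.ofReal.mul_bdd (by fun_prop) (c := 1) (ae_of_all _ fun s => ?_)
  rw [Complex.norm_exp]
  simp

theorem star_fourierCoef (g : ℝ × ℝ → ℝ) (j : ℤ × ℤ) :
    star (fourierCoef g j) = fourierCoef g (-j) := by
  rw [fourierCoef, fourierCoef, RCLike.star_def, map_mul, ← integral_conj]
  congr 1
  · simp [map_ofNat]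
  · refine integral_congr_ae (ae_of_all _ fun s => ?_)
    simp only [map_mul, Complex.conj_ofReal, ← Complex.exp_conj, map_add,
      map_neg, Complex.conj_I, map_intCast, Prod.fst_neg, Prod.snd_neg]
    push_cast
    ring_nf

theorem toeplitz_isHermitian (N₁ N₂ : ℕ) (g : ℝ × ℝ → ℝ) : (toeplitz N₁ N₂ g).IsHermitian := by
  ext j k
  rw [conjTranspose_apply, toeplitz, of_apply, of_apply, star_fourierCoef]
  congr 1
  simp

theorem dotProduct_toeplitz_mulVec {N₁ N₂ : ℕ} {g : ℝ × ℝ → ℝ}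
    (hg : IntegrableOn g (Set.Ioc (-π) π ×ˢ Set.Ioc (-π) π)) (v : Fin N₁ × Fin N₂ → ℂ) :
    star v ⬝ᵥ (toeplitz N₁ N₂ g *ᵥ v) =
      ((1 / (4 * π ^ 2) * ∫ s in Set.Ioc (-π) π ×ˢ Set.Ioc (-π) π,
        g s * Complex.normSq (trigPoly v s) : ℝ) : ℂ) := by
  let d (j k : Fin N₁ × Fin N₂) : ℤ × ℤ := ((j.1 : ℤ) - k.1, (j.2 : ℤ) - k.2)
  have hchar (j k : Fin N₁ × Fin N₂) (s : ℝ × ℝ) :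
      Complex.exp (-Complex.I * (((d j k).1 : ℂ) * s.1 + ((d j k).2 : ℂ) * s.2)) =
        star (Complex.exp (Complex.I * ((j.1 : ℕ) * s.1 + (j.2 : ℕ) * s.2))) *
          Complex.exp (Complex.I * ((k.1 : ℕ) * s.1 + (k.2 : ℕ) * s.2)) := by
    rw [RCLike.star_def, ← Complex.exp_conj, ← Complex.exp_add]
    simp only [d, map_mul, map_add, Complex.conj_I, Complex.conj_ofReal, map_natCast]
    push_cast
    ring_nf
  have hint (j k : Fin N₁ × Fin N₂) := (integrable_fourierCoef_integrand hg (d j k)).const_mul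
    (star (v j) * v k)
  calc star v ⬝ᵥ (toeplitz N₁ N₂ g *ᵥ v)
      = ∑ j, ∑ k, star (v j) * v k * fourierCoef g (d j k) := by
        simp only [dotProduct, mulVec, toeplitz, of_apply, Pi.star_apply, Finset.mul_sum]
        exact Finset.sum_congr rfl fun j _ => Finset.sum_congr rfl fun k _ => by
          rw [← mul_assoc, mul_right_comm]
    _ = 1 / (4 * (π : ℂ) ^ 2) * ∫ s in Set.Ioc (-π) π ×ˢ Set.Ioc (-π) π, ∑ j, ∑ k,
          star (v j) * v k * ((g s : ℂ) *
            Complex.exp (-Complex.I * (((d j k).1 : ℂ) * s.1 + ((d j k).2 : ℂ) * s.2))) := by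
        rw [integral_finsetSum _ fun j _ => integrable_finsetSum _ fun k _ => hint j k,
          Finset.mul_sum]
        refine Finset.sum_congr rfl fun j _ => ?_
        rw [integral_finsetSum _ fun k _ => hint j k, Finset.mul_sum]
        refine Finset.sum_congr rfl fun k _ => ?_
        rw [integral_const_mul, fourierCoef]
        ring
    _ = 1 / (4 * (π : ℂ) ^ 2) * ∫ s in Set.Ioc (-π) π ×ˢ Set.Ioc (-π) π,
          ((g s * Complex.normSq (trigPoly v s) : ℝ) : ℂ) := by
        congr 1
        refine integral_congr_ae (ae_of_all _ fun s => ?_)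
        dsimp only
        rw [Complex.ofReal_mul, Complex.normSq_eq_conj_mul_self, trigPoly, map_sum,
          Finset.sum_mul_sum, Finset.mul_sum]
        refine Finset.sum_congr rfl fun j _ => ?_
        rw [Finset.mul_sum]
        refine Finset.sum_congr rfl fun k _ => ?_
        rw [hchar, map_mul, ← RCLike.star_def]
        ring
    _ = _ := by
        rw [integral_complex_ofReal]
        push_cast
        ring

theorem integral_mul_pos_of_ae_pos {α : Type*} [MeasurableSpace α] {μ : Measure α}
    {f h : α → ℝ} (hf : ∀ᵐ x ∂μ, 0 ≤ f x) (hf₀ : ¬ ∀ᵐ x ∂μ, f x = 0) (hh : ∀ᵐ x ∂μ, 0 < h x)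
    (hfh : Integrable (fun x => f x * h x) μ) : 0 < ∫ x, f x * h x ∂μ := by
  have hnonneg : 0 ≤ᵐ[μ] fun x => f x * h x := by
    filter_upwards [hf, hh] with x hfx hhx
    exact mul_nonneg hfx hhx.le
  refine (integral_nonneg_of_ae hnonneg).lt_of_ne fun hzero => hf₀ ?_
  filter_upwards [(integral_eq_zero_iff_of_nonneg_ae hnonneg hfh).mp hzero.symm, hh]
    with x hfhx hhx
  exact (mul_eq_zero.mp hfhx).resolve_right hhx.ne'

theorem toeplitz_posDef_general (g : ℝ × ℝ → ℝ)
    (hint : IntegrableOn g (Set.Ioc (-π) π ×ˢ Set.Ioc (-π) π))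
    (hnonneg : ∀ᵐ s ∂(volume.restrict (Set.Ioc (-π) π ×ˢ Set.Ioc (-π) π)), 0 ≤ g s)
    (hnonzero : ¬ ∀ᵐ s ∂(volume.restrict (Set.Ioc (-π) π ×ˢ Set.Ioc (-π) π)), g s = 0)
    (N₁ N₂ : ℕ) :
    (toeplitz N₁ N₂ g).PosDef := by
  refine .of_dotProduct_mulVec_pos (toeplitz_isHermitian N₁ N₂ g) fun v hv => ?_
  rw [dotProduct_toeplitz_mulVec hint, Complex.zero_lt_real]
  have hP : ∀ᵐ s ∂(volume.restrict (Set.Ioc (-π) π ×ˢ Set.Ioc (-π) π)),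
      0 < Complex.normSq (trigPoly v s) :=
    ae_restrict_of_ae ((ae_trigPoly_ne_zero v hv).mono fun s => Complex.normSq_pos.mpr)
  have hbound (s : ℝ × ℝ) : ‖Complex.normSq (trigPoly v s)‖ ≤ (∑ j, ‖v j‖) ^ 2 := by
    rw [Real.norm_of_nonneg (Complex.normSq_nonneg _), Complex.normSq_eq_norm_sq]
    gcongr
    exact norm_trigPoly_le v s
  exact mul_pos (by positivity) <| integral_mul_pos_of_ae_pos hnonneg hnonzero hP <|
    hint.mul_bdd (by fun_prop) (ae_of_all _ hbound)

/-- strict positivity of the Toeplitz operator: if `g ≥ 0` a.e. on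
`(−π,π]²`, `g` is `2π`-periodic in each variable, integrable on `(−π,π]²`, and `g` is
not zero almost everywhere, then `T_N(g)` is Hermitian positive definite for every
order `N = (N₁,N₂)`. -/
theorem toeplitz_posDef (g : ℝ × ℝ → ℝ)
    (hper₁ : ∀ s : ℝ × ℝ, g (s.1 + 2 * π, s.2) = g s)
    (hper₂ : ∀ s : ℝ × ℝ, g (s.1, s.2 + 2 * π) = g s)
    (hint : IntegrableOn g (Set.Ioc (-π) π ×ˢ Set.Ioc (-π) π))
    (hnonneg : ∀ᵐ s ∂(volume.restrict (Set.Ioc (-π) π ×ˢ Set.Ioc (-π) π)), 0 ≤ g s)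
    (hnonzero : ¬ ∀ᵐ s ∂(volume.restrict (Set.Ioc (-π) π ×ˢ Set.Ioc (-π) π)), g s = 0)
    (N₁ N₂ : ℕ) :
    (toeplitz N₁ N₂ g).PosDef :=
  toeplitz_posDef_general g hint hnonneg hnonzero N₁ N₂
end

section
/- Eigenvector matrix conditioning for the preconditioned convection-diffusion matrix with constant coefficients: let Θ be a real n × n symmetric positive definite matrix, Ψ a real n × n skew-symmetric matrix, and a > 0 a constant. Set A = aΘ + Ψ and P = aΘ. Then P⁻¹A can be diagonalized as P⁻¹A = V D V⁻¹ where D is a diagonal complex matrix all of whose diagonal entries have real part 1, and the eigenvector matrix V can be chosen of the form V = Θ^{−1/2} Q with Q unitary, so that the spectral condition number of V satisfies K₂(V) = K₂(Θ^{−1/2}) = √(λ_max(Θ)/λ_min(Θ)). -/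
open Matrix
open scoped ComplexOrder

/-- The spectral condition number `K₂(X) = ‖X‖₂ · ‖X⁻¹‖₂` of a complex matrix, with
`‖·‖₂` the operator norm induced by the Euclidean vector norm. -/
noncomputable def spectralCond {n : ℕ} (X : Matrix (Fin n) (Fin n) ℂ) : ℝ :=
  ‖Matrix.toEuclideanCLM (𝕜 := ℂ) X‖ * ‖Matrix.toEuclideanCLM (𝕜 := ℂ) X⁻¹‖

/-- The positive semidefinite square root of a positive semidefinite matrix, as
`Matrix.PosSemidef.sqrt` was defined in Mathlib of December 2024 (since removed). -/
noncomputable def posSemidefSqrt {n : Type*} [Fintype n] [DecidableEq n]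
    {A : Matrix n n ℝ} (hA : A.PosSemidef) : Matrix n n ℝ :=
  hA.1.eigenvectorUnitary.1 * diagonal ((↑) ∘ (√·) ∘ hA.1.eigenvalues) *
    (star hA.1.eigenvectorUnitary : Matrix n n ℝ)

/-!
Let `S = Θ^{1/2}`. Then `P⁻¹A = 1 + a⁻¹ Θ⁻¹Ψ = S⁻¹ (1 + a⁻¹ K) S` with `K = S⁻¹ Ψ S⁻¹`, and `K` is
skew-Hermitian because `S` is Hermitian and `Ψ` skew-symmetric. A unitary diagonalization
`K = Q diag(iμ) Q*` gives `P⁻¹A = V D V⁻¹` with `V = S⁻¹ Q` and `D = 1 + a⁻¹ diag(iμ)`, whose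
diagonal has real part `1`. The spectral norm is unitarily invariant, so `K₂(V) = K₂(S⁻¹) = ‖S‖ ‖S⁻¹‖`, and
since `S` is unitarily similar to `diag(√λᵢ)` this equals `√λ_max / √λ_min`.
-/

open scoped Matrix.Norms.L2Operator

theorem Complex.semiconj_ofReal_star : Function.Semiconj ((↑) : ℝ → ℂ) star star :=
  fun x => (Complex.conj_ofReal x).symm

namespace Matrix

variable {n : Type*} [Fintype n] [DecidableEq n]

theorem exists_mulVec_eq_smul_iff_mem_spectrum {K : Type*} [Field K] (A : Matrix n n K) (μ : K) :
    (∃ x : n → K, x ≠ 0 ∧ A *ᵥ x = μ • x) ↔ μ ∈ spectrum K A := by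
  rw [← spectrum_toLin', ← Module.End.hasEigenvalue_iff_mem_spectrum]
  constructor
  · rintro ⟨x, hx, hAx⟩
    exact Module.End.hasEigenvalue_of_hasEigenvector (x := x)
      ⟨Module.End.mem_eigenspace_iff.mpr (by simpa using hAx), hx⟩
  · intro h
    obtain ⟨x, hx, hx0⟩ := h.exists_hasEigenvector
    exact ⟨x, hx0, by simpa using Module.End.mem_eigenspace_iff.mp hx⟩

theorem IsHermitian.setOf_exists_mulVec_eq_smul_eq_range_eigenvalues {A : Matrix n n ℝ}
    (hA : A.IsHermitian) :
    {μ : ℝ | ∃ x : n → ℝ, x ≠ 0 ∧ A *ᵥ x = μ • x} = Set.range hA.eigenvalues := by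
  ext μ
  exact (exists_mulVec_eq_smul_iff_mem_spectrum A μ).trans
    (Set.ext_iff.mp hA.spectrum_real_eq_range_eigenvalues μ)

theorem map_nonsing_inv {K L : Type*} [Field K] [Field L] (f : K →+* L) (M : Matrix n n K) :
    M⁻¹.map f = (M.map f)⁻¹ := by
  have hdet : (M.map f).det = f M.det := (f.map_det M).symm
  have hadj : (M.map f).adjugate = M.adjugate.map f := (f.map_adjugate M).symm
  rw [inv_def, inv_def, hdet, hadj, Ring.inverse_eq_inv', Ring.inverse_eq_inv', ← map_inv₀]
  ext i j
  simp

theorem inv_unitary_conj_diagonal {K : Type*} [Field K] [StarRing K] {U : Matrix n n K}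
    (hU : U ∈ unitaryGroup n K) {d : n → K} (hd : ∀ i, d i ≠ 0) :
    (U * diagonal d * star U)⁻¹ = U * diagonal d⁻¹ * star U := by
  refine inv_eq_left_inv ?_
  have hdd : diagonal d⁻¹ * diagonal d = 1 := by
    rw [diagonal_mul_diagonal, ← diagonal_one]
    exact congrArg diagonal (funext fun i => inv_mul_cancel₀ (hd i))
  calc U * diagonal d⁻¹ * star U * (U * diagonal d * star U)
      = U * (diagonal d⁻¹ * (star U * U) * diagonal d) * star U := by
        simp only [Matrix.mul_assoc]
    _ = 1 := by
        rw [mem_unitaryGroup_iff'.mp hU, Matrix.mul_one, hdd, Matrix.mul_one,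
          mem_unitaryGroup_iff.mp hU]

section MapStarRingHom

variable {R S : Type*} [CommRing R] [StarRing R] [CommRing S] [StarRing S]

theorem map_mem_unitaryGroup (f : R →+* S) (hf : Function.Semiconj f star star)
    {U : Matrix n n R} (hU : U ∈ unitaryGroup n R) : U.map f ∈ unitaryGroup n S := by
  rw [mem_unitaryGroup_iff] at hU ⊢
  rw [star_eq_conjTranspose, ← conjTranspose_map f hf, ← Matrix.map_mul, ← star_eq_conjTranspose,
    hU, Matrix.map_one f f.map_zero f.map_one]

theorem map_unitary_conj_diagonal (f : R →+* S) (hf : Function.Semiconj f star star)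
    (U : Matrix n n R) (d : n → R) :
    (U * diagonal d * star U).map f = U.map f * diagonal (f ∘ d) * star (U.map f) := by
  rw [Matrix.map_mul, Matrix.map_mul, diagonal_map f.map_zero, star_eq_conjTranspose,
    star_eq_conjTranspose, conjTranspose_map f hf]
  rfl

end MapStarRingHom

section L2OpNorm

variable {𝕜 : Type*} [RCLike 𝕜]

theorem l2_opNorm_diagonal_of_isGreatest {d : n → 𝕜} {c : ℝ}
    (h : IsGreatest (Set.range (‖d ·‖)) c) : ‖diagonal d‖ = c := by
  obtain ⟨⟨i, rfl⟩, hub⟩ := h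
  rw [l2_opNorm_diagonal]
  exact le_antisymm ((pi_norm_le_iff_of_nonneg (norm_nonneg _)).mpr fun j => hub ⟨j, rfl⟩)
    (norm_le_pi_norm d i)

theorem l2_opNorm_unitary_conj {U : Matrix n n 𝕜} (hU : U ∈ unitaryGroup n 𝕜)
    (X : Matrix n n 𝕜) : ‖U * X * star U‖ = ‖X‖ := by
  rw [CStarRing.norm_mul_mem_unitary _ (Unitary.star_mem hU), CStarRing.norm_mem_unitary_mul _ hU]

end L2OpNorm

theorem exists_unitary_diagonal_of_conjTranspose_eq_neg {K : Matrix n n ℂ} (hK : Kᴴ = -K) :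
    ∃ Q ∈ unitaryGroup n ℂ, ∃ μ : n → ℝ,
      K = Q * diagonal (fun i => μ i * Complex.I) * star Q := by
  have hH : (-Complex.I • K).IsHermitian := by
    rw [IsHermitian, conjTranspose_smul, hK]
    simp
  refine ⟨hH.eigenvectorUnitary, hH.eigenvectorUnitary.2, hH.eigenvalues, ?_⟩
  have hdiag : diagonal (fun i => (hH.eigenvalues i : ℂ) * Complex.I) =
      Complex.I • diagonal (RCLike.ofReal ∘ hH.eigenvalues) := by
    rw [← diagonal_smul]
    congr 1
    funext i
    simp [mul_comm]
  calc K = Complex.I • (-Complex.I • K) := by simp [smul_smul]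
    _ = _ := by
        rw [congrArg (Complex.I • ·) hH.spectral_theorem, Unitary.conjStarAlgAut_apply, hdiag,
          Matrix.mul_smul, Matrix.smul_mul]

theorem preconditioned_similarity {S Ψ : Matrix n n ℂ} (hS : S.IsHermitian) (hSu : IsUnit S)
    (hΨ : Ψᴴ = -Ψ) {a : ℝ} (ha : a ≠ 0) :
    ∃ Q ∈ unitaryGroup n ℂ, ∃ D : Matrix n n ℂ, D.IsDiag ∧ (∀ i, (D i i).re = 1) ∧
      ((a : ℂ) • (S * S))⁻¹ * ((a : ℂ) • (S * S) + Ψ) = S⁻¹ * Q * D * (S⁻¹ * Q)⁻¹ := by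
  have hdet : IsUnit S.det := (isUnit_iff_isUnit_det S).mp hSu
  have haC : (a : ℂ) ≠ 0 := Complex.ofReal_ne_zero.mpr ha
  have hK : (S⁻¹ * Ψ * S⁻¹)ᴴ = -(S⁻¹ * Ψ * S⁻¹) := by
    rw [conjTranspose_mul, conjTranspose_mul, conjTranspose_nonsing_inv, hS.eq, hΨ,
      Matrix.neg_mul, Matrix.mul_neg, Matrix.mul_assoc]
  obtain ⟨Q, hQ, μ, hKQ⟩ := exists_unitary_diagonal_of_conjTranspose_eq_neg hK
  refine ⟨Q, hQ, 1 + (a : ℂ)⁻¹ • diagonal (fun i => μ i * Complex.I),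
    isDiag_one.add ((isDiag_diagonal _).smul _), fun i => by simp, ?_⟩
  have hQinv : (S⁻¹ * Q)⁻¹ = star Q * S := by
    refine inv_eq_right_inv ?_
    rw [Matrix.mul_assoc, ← Matrix.mul_assoc Q, mem_unitaryGroup_iff.mp hQ, Matrix.one_mul,
      nonsing_inv_mul S hdet]
  have hPinv : ((a : ℂ) • (S * S))⁻¹ = (a : ℂ)⁻¹ • (S⁻¹ * S⁻¹) := by
    refine inv_eq_left_inv ?_
    rw [smul_mul_smul_comm, inv_mul_cancel₀ haC, one_smul, Matrix.mul_assoc,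
      ← Matrix.mul_assoc S⁻¹ S, nonsing_inv_mul S hdet, Matrix.one_mul, nonsing_inv_mul S hdet]
  have hconj : S⁻¹ * Q * (1 + (a : ℂ)⁻¹ • diagonal (fun i => μ i * Complex.I)) * (star Q * S)
      = S⁻¹ * (Q * star Q + (a : ℂ)⁻¹ • (Q * diagonal (fun i => μ i * Complex.I) * star Q)) *
          S := by
    simp only [Matrix.mul_add, Matrix.add_mul, Matrix.mul_smul, Matrix.smul_mul, Matrix.mul_one,
      Matrix.mul_assoc]
  rw [hQinv, hPinv, hconj, mem_unitaryGroup_iff.mp hQ, ← hKQ, Matrix.mul_add, smul_mul_smul_comm,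
    inv_mul_cancel₀ haC, one_smul]
  simp only [Matrix.mul_add, Matrix.add_mul, Matrix.mul_smul, Matrix.smul_mul, Matrix.mul_one,
    Matrix.mul_assoc, nonsing_inv_mul S hdet, nonsing_inv_mul_cancel_left _ _ hdet]

end Matrix

theorem spectralCond_eq_norm_mul_norm_inv {m : ℕ} (X : Matrix (Fin m) (Fin m) ℂ) :
    spectralCond X = ‖X‖ * ‖X⁻¹‖ := rfl

theorem spectralCond_mul_unitary {m : ℕ} (X : Matrix (Fin m) (Fin m) ℂ)
    {Q : Matrix (Fin m) (Fin m) ℂ} (hQ : Q ∈ unitaryGroup (Fin m) ℂ) :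
    spectralCond (X * Q) = spectralCond X := by
  have hQinv : Q⁻¹ = star Q := inv_eq_left_inv (mem_unitaryGroup_iff'.mp hQ)
  rw [spectralCond_eq_norm_mul_norm_inv, spectralCond_eq_norm_mul_norm_inv, Matrix.mul_inv_rev,
    hQinv, CStarRing.norm_mul_mem_unitary _ hQ,
    CStarRing.norm_mem_unitary_mul _ (Unitary.star_mem hQ)]

section PosSemidefSqrt

variable {n : Type*} [Fintype n] [DecidableEq n]

theorem posSemidefSqrt_eq_cfc {A : Matrix n n ℝ} (hA : A.PosSemidef) :
    posSemidefSqrt hA = cfc Real.sqrt A :=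
  (hA.1.cfc_eq Real.sqrt).symm

theorem posSemidefSqrt_mul_self {A : Matrix n n ℝ} (hA : A.PosSemidef) :
    posSemidefSqrt hA * posSemidefSqrt hA = A := by
  have hspec : ∀ x ∈ spectrum ℝ A, √x * √x = x := by
    intro x hx
    rw [hA.1.spectrum_real_eq_range_eigenvalues] at hx
    obtain ⟨i, rfl⟩ := hx
    exact Real.mul_self_sqrt (hA.eigenvalues_nonneg i)
  rw [posSemidefSqrt_eq_cfc, ← cfc_mul .., cfc_congr hspec]
  exact cfc_id' ℝ A hA.1

theorem isHermitian_posSemidefSqrt {A : Matrix n n ℝ} (hA : A.PosSemidef) :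
    (posSemidefSqrt hA).IsHermitian := by
  rw [posSemidefSqrt_eq_cfc]
  exact cfc_predicate Real.sqrt A

theorem isUnit_posSemidefSqrt {A : Matrix n n ℝ} (hA : A.PosDef) :
    IsUnit (posSemidefSqrt hA.posSemidef) := by
  have hdet := (isUnit_iff_isUnit_det _).mp hA.isUnit
  rw [← posSemidefSqrt_mul_self hA.posSemidef, det_mul, IsUnit.mul_iff] at hdet
  exact (isUnit_iff_isUnit_det _).mpr hdet.1

theorem exists_unitary_map_posSemidefSqrt_eq {A : Matrix n n ℝ} (hA : A.PosSemidef) :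
    ∃ W ∈ unitaryGroup n ℂ, (posSemidefSqrt hA).map ((↑) : ℝ → ℂ) =
      W * diagonal (fun i => ((√(hA.1.eigenvalues i) : ℝ) : ℂ)) * star W :=
  ⟨_, map_mem_unitaryGroup Complex.ofRealHom Complex.semiconj_ofReal_star
      hA.1.eigenvectorUnitary.2,
    map_unitary_conj_diagonal Complex.ofRealHom Complex.semiconj_ofReal_star _ _⟩

theorem l2_opNorm_map_posSemidefSqrt {A : Matrix n n ℝ} (hA : A.PosSemidef) {c : ℝ}
    (hc : IsGreatest (Set.range hA.1.eigenvalues) c) :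
    ‖(posSemidefSqrt hA).map ((↑) : ℝ → ℂ)‖ = √c := by
  obtain ⟨W, hW, hS⟩ := exists_unitary_map_posSemidefSqrt_eq hA
  rw [hS, l2_opNorm_unitary_conj hW, l2_opNorm_diagonal_of_isGreatest]
  have hnorm : (fun i => ‖((√(hA.1.eigenvalues i) : ℝ) : ℂ)‖) = Real.sqrt ∘ hA.1.eigenvalues := by
    funext i
    simp
  rw [hnorm, Set.range_comp]
  exact Real.sqrt_monotone.map_isGreatest hc

theorem l2_opNorm_inv_map_posSemidefSqrt {A : Matrix n n ℝ} (hA : A.PosDef) {c : ℝ}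
    (hc : IsLeast (Set.range hA.posSemidef.1.eigenvalues) c) :
    ‖((posSemidefSqrt hA.posSemidef).map ((↑) : ℝ → ℂ))⁻¹‖ = (√c)⁻¹ := by
  obtain ⟨W, hW, hS⟩ := exists_unitary_map_posSemidefSqrt_eq hA.posSemidef
  have hpos := hA.eigenvalues_pos
  rw [hS, inv_unitary_conj_diagonal hW fun i => by simpa using (Real.sqrt_pos.mpr (hpos i)).ne',
    l2_opNorm_unitary_conj hW, l2_opNorm_diagonal_of_isGreatest]
  have hnorm : (fun i => ‖(fun i => ((√(hA.posSemidef.1.eigenvalues i) : ℝ) : ℂ))⁻¹ i‖) =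
      (fun x => (√x)⁻¹) ∘ hA.posSemidef.1.eigenvalues := by
    funext i
    simp
  have hanti : AntitoneOn (fun x => (√x)⁻¹) (Set.range hA.posSemidef.1.eigenvalues) := by
    rintro _ ⟨i, rfl⟩ _ ⟨j, rfl⟩ hij
    exact inv_anti₀ (Real.sqrt_pos.mpr (hpos i)) (Real.sqrt_le_sqrt hij)
  rw [hnorm, Set.range_comp]
  exact hanti.map_isLeast hc

end PosSemidefSqrt

/-- eigenvector-matrix conditioning for the preconditioned
convection-diffusion matrix with constant coefficients.  Let `Θ` be real symmetric
positive definite, `Ψ` real skew-symmetric, `a > 0`, `A = aΘ + Ψ`, `P = aΘ`.  Then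
`P⁻¹A = V D V⁻¹` with `D` diagonal whose diagonal entries all have real part `1`, and
`V = Θ^{−1/2} Q` with `Q` unitary, so that
`K₂(V) = K₂(Θ^{−1/2}) = √(λ_max(Θ)/λ_min(Θ))`. -/
theorem preconditioned_eigenvector_conditioning (n : ℕ)
    (Θ Ψ : Matrix (Fin n) (Fin n) ℝ) (hΘ : Θ.PosDef) (hΨ : Ψᵀ = -Ψ)
    (a : ℝ) (ha : 0 < a)
    (A P : Matrix (Fin n) (Fin n) ℂ)
    (hA : A = (a : ℂ) • Θ.map ((↑) : ℝ → ℂ) + Ψ.map ((↑) : ℝ → ℂ))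
    (hP : P = (a : ℂ) • Θ.map ((↑) : ℝ → ℂ))
    (lmin lmax : ℝ)
    (hmin : IsLeast {μ : ℝ | ∃ x : Fin n → ℝ, x ≠ 0 ∧ Θ.mulVec x = μ • x} lmin)
    (hmax : IsGreatest {μ : ℝ | ∃ x : Fin n → ℝ, x ≠ 0 ∧ Θ.mulVec x = μ • x} lmax) :
    ∃ V D Q : Matrix (Fin n) (Fin n) ℂ,
      Q ∈ Matrix.unitaryGroup (Fin n) ℂ ∧
      V = ((posSemidefSqrt hΘ.posSemidef)⁻¹).map ((↑) : ℝ → ℂ) * Q ∧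
      D.IsDiag ∧ (∀ i : Fin n, (D i i).re = 1) ∧
      IsUnit V ∧ P⁻¹ * A = V * D * V⁻¹ ∧
      spectralCond V = spectralCond (((posSemidefSqrt hΘ.posSemidef)⁻¹).map ((↑) : ℝ → ℂ)) ∧
      spectralCond V = Real.sqrt (lmax / lmin) := by
  rw [hΘ.posSemidef.1.setOf_exists_mulVec_eq_smul_eq_range_eigenvalues] at hmin hmax
  set S := posSemidefSqrt hΘ.posSemidef
  set Sc := S.map ((↑) : ℝ → ℂ)
  have hSc : IsUnit Sc := (isUnit_posSemidefSqrt hΘ).map Complex.ofRealHom.mapMatrix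
  have hΘc : Θ.map ((↑) : ℝ → ℂ) = Sc * Sc := by
    rw [← posSemidefSqrt_mul_self hΘ.posSemidef]
    exact Complex.ofRealHom.mapMatrix.map_mul S S
  have hΨc : (Ψ.map ((↑) : ℝ → ℂ))ᴴ = -Ψ.map ((↑) : ℝ → ℂ) := by
    rw [← conjTranspose_map _ Complex.semiconj_ofReal_star,
      conjTranspose_eq_transpose_of_trivial, hΨ, Matrix.map_neg _ Complex.ofReal_neg]
  obtain ⟨Q, hQ, D, hD, hDre, hsim⟩ := preconditioned_similarity
    ((isHermitian_posSemidefSqrt _).map _ Complex.semiconj_ofReal_star) hSc hΨc ha.ne'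
  have hSinv : (S⁻¹).map ((↑) : ℝ → ℂ) = Sc⁻¹ := map_nonsing_inv Complex.ofRealHom S
  have hpos : 0 < lmin := by
    obtain ⟨i, rfl⟩ := hmin.1
    exact hΘ.eigenvalues_pos i
  refine ⟨Sc⁻¹ * Q, D, Q, hQ, by rw [hSinv], hD, hDre,
    (isUnit_nonsing_inv_iff.mpr hSc).mul (Unitary.isUnit_coe (U := ⟨Q, hQ⟩)),
    by rw [hP, hA, hΘc, hsim], by rw [hSinv, spectralCond_mul_unitary _ hQ], ?_⟩
  rw [spectralCond_mul_unitary _ hQ, spectralCond_eq_norm_mul_norm_inv,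
    nonsing_inv_nonsing_inv _ ((isUnit_iff_isUnit_det _).mp hSc),
    l2_opNorm_inv_map_posSemidefSqrt hΘ hmin, l2_opNorm_map_posSemidefSqrt _ hmax,
    Real.sqrt_div' _ hpos.le, div_eq_inv_mul]
end
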